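/- Let M ≥ N ≥ r ≥ 1 be integers, let s ≥ 1 be an integer, let a_1 < a_2 < … < a_s be real numbers with a_1 > −1, and let r_1, …, r_s be positive integers with r_1 + ⋯ + r_s = r. Fix r' ∈ {1, …, r} and let s' ∈ {1, …, s} and t' ∈ {1, …, r_{s'}} be determined by r' = r_1 + ⋯ + r_{s'−1} + t'. Let 0 < ρ < min(1, min_{1 ≤ j ≤ s'} 1/(1+a_j)). Then for every integer k with 0 ≤ k ≤ N−r−1, ∫_0^∞ x^k · [ (1/(2πi)) ∮_{|z|=ρ} e^{M x (z−1)} · (z−1)^{N−r} · z^{−(M−r+r')} · (∏_{j=1}^{s'−1} (z − 1/(1+a_j))^{r_j}) · (z − 1/(1+a_{s'}))^{t'−1} dz ] dx = 0. -/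

import Mathlib

/-!
On the circle `Re z ≤ ρ < 1`, so Fubini lets us integrate in `x` first:
`∫₀^∞ x^k e^{Mx(z-1)} dx = k! / (M(1-z))^(k+1)`. This cancels `k + 1` of the `N - r` factors
`z - 1`, and what remains is `∮ p(z) / z^(M-r+r') dz` for a polynomial `p` of degree at most
`(N - r - k - 1) + (r' - 1) ≤ M - r + r' - 2`, which has no residue at `0`.
-/

open MeasureTheory Set Filter Topology Metric Function Polynomial Complex

lemma norm_ofReal_pow_mul_cexp_neg_mul (k : ℕ) (b : ℂ) {x : ℝ} (hx : 0 ≤ x) :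
    ‖(x : ℂ) ^ k * cexp (-(b * x))‖ = x ^ k * Real.exp (-(b.re * x)) := by
  rw [norm_mul, norm_pow, norm_exp, norm_real, Real.norm_of_nonneg hx]
  simp [mul_re]

lemma integrableOn_Ioi_pow_mul_cexp_neg_mul (k : ℕ) {b : ℂ} (hb : 0 < b.re) :
    IntegrableOn (fun x : ℝ ↦ (x : ℂ) ^ k * cexp (-(b * x))) (Ioi 0) := by
  have hreal : IntegrableOn (fun x : ℝ ↦ x ^ k * Real.exp (-(b.re * x))) (Ioi 0) := by
    simpa [Real.rpow_natCast] using
      integrableOn_rpow_mul_exp_neg_mul_rpow (s := k) (p := 1)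
        (by linarith [k.cast_nonneg (α := ℝ)]) one_pos hb
  refine hreal.mono' (by fun_prop) ?_
  filter_upwards [ae_restrict_mem measurableSet_Ioi] with x hx
  exact (norm_ofReal_pow_mul_cexp_neg_mul k b (le_of_lt hx)).le

lemma tendsto_pow_mul_cexp_neg_mul_atTop (k : ℕ) {b : ℂ} (hb : 0 < b.re) :
    Tendsto (fun x : ℝ ↦ (x : ℂ) ^ k * cexp (-(b * x))) atTop (𝓝 0) := by
  rw [tendsto_zero_iff_norm_tendsto_zero]
  have h := tendsto_rpow_mul_exp_neg_mul_atTop_nhds_zero k b.re hb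
  simp only [Real.rpow_natCast] at h
  refine h.congr' ?_
  filter_upwards [eventually_ge_atTop 0] with x hx
  rw [norm_ofReal_pow_mul_cexp_neg_mul k b hx, neg_mul]

lemma integral_Ioi_pow_mul_cexp_neg_mul (k : ℕ) {b : ℂ} (hb : 0 < b.re) :
    ∫ x in Ioi (0 : ℝ), (x : ℂ) ^ k * cexp (-(b * x)) = k.factorial / b ^ (k + 1) := by
  have hb0 : b ≠ 0 := fun h ↦ by simp [h] at hb
  induction k with
  | zero =>
    simpa [neg_mul, neg_div] using integral_exp_mul_complex_Ioi (a := -b) (by simpa) 0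
  | succ k ih =>
    have hderiv : ∀ x ∈ Ici (0 : ℝ), HasDerivAt (fun x : ℝ ↦ (x : ℂ) ^ (k + 1) * cexp (-(b * x)))
        ((k + 1) * ((x : ℂ) ^ k * cexp (-(b * x))) - b * ((x : ℂ) ^ (k + 1) * cexp (-(b * x))))
        x := by
      intro x _
      have h := ((hasDerivAt_pow (k + 1) (x : ℂ)).fun_mul
        (((hasDerivAt_id' (x : ℂ)).const_mul b).fun_neg.cexp)).comp_ofReal
      convert h using 1
      push_cast
      ring
    have hint := fun j ↦ integrableOn_Ioi_pow_mul_cexp_neg_mul j hb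
    have h := integral_Ioi_of_hasDerivAt_of_tendsto' hderiv
      (((hint k).const_mul _).sub ((hint (k + 1)).const_mul _))
      (tendsto_pow_mul_cexp_neg_mul_atTop (k + 1) hb)
    rw [integral_sub ((hint k).const_mul _) ((hint (k + 1)).const_mul _), integral_const_mul,
      integral_const_mul, ih, ofReal_zero, zero_pow k.succ_ne_zero, zero_mul, sub_zero] at h
    rw [eq_div_iff (pow_ne_zero _ hb0)]
    field_simp at h
    push_cast [Nat.factorial_succ]
    linear_combination -h

lemma circleIntegral_eval_div_pow_eq_zero (p : ℂ[X]) {m : ℕ} (hm : p.natDegree + 2 ≤ m) (R : ℝ) :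
    (∮ z in C(0, R), p.eval z / z ^ m) = 0 := by
  have hexpand : (fun z ↦ p.eval z / z ^ m) =
      fun z ↦ ∑ i ∈ Finset.range (m - 1), p.coeff i * (z - 0) ^ ((i : ℤ) - m) := by
    funext z
    rw [eval_eq_sum_range' (by omega : p.natDegree < m - 1), Finset.sum_div]
    refine Finset.sum_congr rfl fun i hi ↦ ?_
    rw [Finset.mem_range] at hi
    rcases eq_or_ne z 0 with rfl | hz
    · simp [zero_zpow _ (by omega : (i : ℤ) - m ≠ 0), zero_pow (by omega : m ≠ 0)]
    · rw [sub_zero, mul_div_assoc, zpow_sub₀ hz, zpow_natCast, zpow_natCast, div_eq_mul_inv]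
  have hint (n : ℤ) : CircleIntegrable (fun z ↦ (z - 0) ^ n) 0 R := by
    rcases eq_or_ne R 0 with hR | hR
    · exact circleIntegrable_sub_zpow_iff.2 (Or.inl hR)
    · exact circleIntegrable_sub_zpow_iff.2 (Or.inr (Or.inr (by simpa using (abs_pos.2 hR).ne)))
  rw [hexpand, circleIntegral.integral_fun_sum
    (f := fun i z ↦ p.coeff i * (z - 0) ^ ((i : ℤ) - m)) fun i _ ↦ (hint _).const_smul]
  refine Finset.sum_eq_zero fun i hi ↦ ?_
  rw [Finset.mem_range] at hi
  rw [circleIntegral.integral_const_mul, circleIntegral.integral_sub_zpow_of_ne (by omega),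
    mul_zero]

lemma integral_circleIntegral_comm {E : Type*} [NormedAddCommGroup E] [NormedSpace ℂ E]
    [CompleteSpace E] {μ : Measure ℝ} [SFinite μ] {F : ℝ → ℂ → E} {c : ℂ} {R : ℝ} {φ : ℝ → ℝ}
    (hF : ContinuousOn (uncurry F) (univ ×ˢ sphere c |R|)) (hφ : Integrable φ μ)
    (hbound : ∀ᵐ x ∂μ, ∀ z ∈ sphere c |R|, ‖F x z‖ ≤ φ x) :
    ∫ x, (∮ z in C(c, R), F x z) ∂μ = ∮ z in C(c, R), ∫ x, F x z ∂μ := by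
  simp only [circleIntegral, intervalIntegral.integral_of_le Real.two_pi_pos.le,
    ← integral_smul]
  refine integral_integral_swap ?_
  have hcont : Continuous fun q : ℝ × ℝ ↦
      deriv (circleMap c R) q.2 • F q.1 (circleMap c R q.2) := by
    refine Continuous.smul ?_ ?_
    · simp only [deriv_circleMap]
      fun_prop
    exact hF.comp_continuous (f := fun q : ℝ × ℝ ↦ (q.1, circleMap c R q.2)) (by fun_prop)
      fun q ↦ ⟨mem_univ _, circleMap_mem_sphere' c R q.2⟩
  have hν : Integrable (fun _ : ℝ ↦ |R|) (volume.restrict (Ioc 0 (2 * Real.pi))) :=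
    integrable_const _
  refine (hφ.mul_prod hν).mono' hcont.aestronglyMeasurable ?_
  filter_upwards [Measure.quasiMeasurePreserving_fst.ae hbound] with q hq
  rw [uncurry_def, norm_smul, deriv_circleMap, norm_mul, norm_I, mul_one, norm_circleMap_zero,
    mul_comm]
  exact mul_le_mul_of_nonneg_right (hq _ (circleMap_mem_sphere' c R q.2)) (abs_nonneg R)

lemma integral_Ioi_pow_mul_circleIntegral_cexp (k : ℕ) {c R : ℝ} (hc : 0 < c) (hR0 : 0 ≤ R)
    (hR1 : R < 1) {g : ℂ → ℂ} (hg : ContinuousOn g (sphere 0 R)) :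
    ∫ x in Ioi (0 : ℝ), (x : ℂ) ^ k * ∮ z in C(0, R), cexp (c * x * (z - 1)) * g z =
      ∮ z in C(0, R), k.factorial / (c * (1 - z)) ^ (k + 1) * g z := by
  rw [← abs_of_nonneg hR0] at hg
  obtain ⟨C, hC⟩ := (isCompact_sphere (0 : ℂ) |R|).exists_bound_of_continuousOn hg
  have hre {z : ℂ} (hz : z ∈ sphere (0 : ℂ) |R|) : c * (1 - R) ≤ (c * (1 - z)).re := by
    have : z.re ≤ R := by
      rw [mem_sphere_zero_iff_norm, abs_of_nonneg hR0] at hz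
      exact hz ▸ z.re_le_norm
    simpa using mul_le_mul_of_nonneg_left (by linarith) hc.le
  have hbR : 0 < ((c * (1 - R) : ℝ) : ℂ).re := by simpa using mul_pos hc (by linarith)
  simp_rw [← circleIntegral.integral_const_mul]
  rw [integral_circleIntegral_comm
    (φ := fun x ↦ C * ‖(x : ℂ) ^ k * cexp (-((c * (1 - R) : ℝ) * x))‖)]
  · refine circleIntegral.integral_congr hR0 fun z hz ↦ ?_
    rw [← abs_of_nonneg hR0] at hz
    have hb : 0 < (c * (1 - z)).re := by linarith [hre hz, mul_pos hc (sub_pos.2 hR1)]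
    rw [← integral_Ioi_pow_mul_cexp_neg_mul k hb, ← integral_mul_const]
    congr with x
    ring_nf
  · exact ContinuousOn.mul (by fun_prop)
      (ContinuousOn.mul (by fun_prop) (hg.comp continuous_snd.continuousOn fun q hq ↦ hq.2))
  · exact ((integrableOn_Ioi_pow_mul_cexp_neg_mul k hbR).norm.const_mul C)
  · filter_upwards [ae_restrict_mem measurableSet_Ioi] with x hx z hz
    rw [show (c : ℂ) * x * (z - 1) = -(c * (1 - z) * x) by ring, ← mul_assoc, norm_mul,
      mul_comm C]
    refine mul_le_mul ?_ (hC z hz) (norm_nonneg _) (norm_nonneg _)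
    rw [norm_ofReal_pow_mul_cexp_neg_mul k _ (le_of_lt hx),
      norm_ofReal_pow_mul_cexp_neg_mul k _ (le_of_lt hx)]
    refine mul_le_mul_of_nonneg_left (Real.exp_le_exp.2 (neg_le_neg ?_)) (pow_nonneg hx.out.le k)
    exact mul_le_mul_of_nonneg_right (by simpa using hre hz) hx.out.le

lemma natDegree_X_sub_C_pow_le {R : Type*} [Ring R] (a : R) (n : ℕ) :
    ((X - C a) ^ n).natDegree ≤ n := by
  simpa using natDegree_pow_le_of_le n (natDegree_X_sub_C_le a)

lemma circleIntegral_div_one_sub_pow_mul_eq_zero (w c : ℂ) (Q : ℂ[X]) {k n m : ℕ}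
    (hkn : k + 1 ≤ n) (hdeg : n - (k + 1) + Q.natDegree + 2 ≤ m) {R : ℝ} (hR0 : 0 ≤ R)
    (hR1 : R < 1) :
    (∮ z in C(0, R), w / (c * (1 - z)) ^ (k + 1) * ((z - 1) ^ n / z ^ m * Q.eval z)) = 0 := by
  set p : ℂ[X] := (X - C 1) ^ (n - (k + 1)) * Q
  have hp : p.natDegree + 2 ≤ m := by
    have : p.natDegree ≤ n - (k + 1) + Q.natDegree :=
      natDegree_mul_le.trans (Nat.add_le_add_right (natDegree_X_sub_C_pow_le 1 _) _)
    omega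
  have hEq : EqOn (fun z ↦ w / (c * (1 - z)) ^ (k + 1) * ((z - 1) ^ n / z ^ m * Q.eval z))
      (fun z ↦ w * (-1) ^ (k + 1) / c ^ (k + 1) * (p.eval z / z ^ m)) (sphere 0 R) := by
    intro z hz
    have hz1 : 1 - z ≠ 0 := by
      rintro h
      rw [mem_sphere_zero_iff_norm, ← sub_eq_zero.1 h, norm_one] at hz
      linarith
    have hsplit : (z - 1) ^ n = (-1) ^ (k + 1) * (1 - z) ^ (k + 1) * (z - 1) ^ (n - (k + 1)) := by
      rw [← mul_pow, neg_one_mul, neg_sub, ← pow_add, Nat.add_sub_cancel' hkn]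
    simp only [p, eval_mul, eval_pow, eval_sub, eval_X, eval_C, hsplit, mul_pow]
    field_simp
  rw [circleIntegral.integral_congr hR0 hEq, circleIntegral.integral_const_mul,
    circleIntegral_eval_div_pow_eq_zero p hp, mul_zero]

theorem stmt_6 (M N r s : ℕ) (hNM : N ≤ M)
    (a : Fin s → ℝ) (rm : Fin s → ℕ) (r' : ℕ)
    (s' : Fin s) (t' : ℕ) (ht'1 : 1 ≤ t')
    (hdecomp : r' = (∑ j ∈ Finset.Iio s', rm j) + t')
    (ρ : ℝ) (hρ0 : 0 < ρ) (hρ1 : ρ < 1)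
    (k : ℕ) (hk : k + r + 1 ≤ N) :
    ∫ x in Set.Ioi (0 : ℝ), (x : ℂ) ^ k *
      ((2 * (Real.pi : ℂ) * Complex.I)⁻¹ *
        ∮ z in C(0, ρ),
          Complex.exp ((M : ℂ) * (x : ℂ) * (z - 1)) * (z - 1) ^ (N - r) / z ^ (M - r + r') *
            (∏ j ∈ Finset.Iio s', (z - 1 / (1 + (a j : ℂ))) ^ rm j) *
            (z - 1 / (1 + (a s' : ℂ))) ^ (t' - 1)) = 0 := by
  set Q : ℂ[X] := (∏ j ∈ Finset.Iio s', (X - C (1 / (1 + (a j : ℂ)))) ^ rm j) *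
    (X - C (1 / (1 + (a s' : ℂ)))) ^ (t' - 1)
  have hQ : Q.natDegree ≤ (∑ j ∈ Finset.Iio s', rm j) + (t' - 1) :=
    natDegree_mul_le.trans <| Nat.add_le_add
      ((natDegree_prod_le _ _).trans (Finset.sum_le_sum fun j _ ↦ natDegree_X_sub_C_pow_le _ _))
      (natDegree_X_sub_C_pow_le _ _)
  have hg : ContinuousOn (fun z ↦ (z - 1) ^ (N - r) / z ^ (M - r + r') * Q.eval z)
      (sphere 0 ρ) :=
    ((continuous_id.sub continuous_const).pow _).continuousOn.div
      (continuous_pow _).continuousOn (fun z hz ↦ pow_ne_zero _ (ne_of_mem_sphere hz hρ0.ne'))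
      |>.mul Q.continuous.continuousOn
  have hM : (0 : ℝ) < M := by exact_mod_cast (show 0 < M by omega)
  have h := integral_Ioi_pow_mul_circleIntegral_cexp k hM hρ0.le hρ1 hg
  rw [circleIntegral_div_one_sub_pow_mul_eq_zero _ _ Q (by omega) (by omega) hρ0.le hρ1] at h
  simp_rw [mul_left_comm _ (2 * (Real.pi : ℂ) * I)⁻¹]
  rw [integral_const_mul]
  refine mul_eq_zero_of_right _ (Eq.trans (integral_congr_ae (ae_of_all _ fun x ↦ ?_)) h)
  dsimp only
  congr 1
  refine circleIntegral.integral_congr hρ0.le fun z _ ↦ ?_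
  simp only [Q, eval_mul, eval_prod, eval_pow, eval_sub, eval_X, eval_C, ofReal_natCast]
  ring
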